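/- Suppose positive real-valued differentiable functions P_1, ..., P_n : ℝ → ℝ satisfy dP_i/dt = c_i · P_i(t) for constants c_1, ..., c_n ∈ ℝ (the Lotka–Volterra equations with constant fitness functions). Let p_i(t) = P_i(t) / Σ_j P_j(t) and f̄(t) = Σ_j p_j(t) c_j. Then d f̄/dt = Σ_j p_j(t)(c_j − f̄(t))²; in particular, the mean fitness f̄ is nondecreasing in time. -/

import Mathlib

/-!
Each proportion `p i = P i / ∑ j, P j` obeys the replicator equation `p i' = p i * (c i - f̄)`,
by the quotient rule. Hence `f̄' = ∑ j, p j * (c j - f̄) * c j`, and since the proportions sum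
to one, `∑ j, p j * (c j - f̄) = 0`, so `c j` may be replaced by `c j - f̄`: the derivative is
the variance of the fitness, which is nonnegative.
-/

open Finset

section
variable {ι : Type*} [Fintype ι]

theorem sum_div_sum_mul_sub_mean_eq_zero (w c : ι → ℝ) :
    ∑ j, (w j / ∑ k, w k) * (c j - ∑ k, (w k / ∑ l, w l) * c k) = 0 := by
  by_cases hS : ∑ k, w k = 0
  · simp [hS] -- every weight is `w j / 0 = 0`
  · simp only [mul_sub, sum_sub_distrib, ← sum_mul, ← sum_div, div_self hS, one_mul, sub_self]

theorem sum_mul_sub_mean_mul_eq_sum_mul_sub_mean_sq (p c : ι → ℝ)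
    (hcentered : ∑ j, p j * (c j - ∑ k, p k * c k) = 0) :
    ∑ j, p j * (c j - ∑ k, p k * c k) * c j = ∑ j, p j * (c j - ∑ k, p k * c k) ^ 2 := by
  rw [← sub_eq_zero, ← sum_sub_distrib]
  calc ∑ j, (p j * (c j - _) * c j - p j * (c j - _) ^ 2)
      = (∑ j, p j * (c j - ∑ k, p k * c k)) * ∑ k, p k * c k := by
        rw [sum_mul]; exact sum_congr rfl fun j _ ↦ by ring
    _ = 0 := by rw [hcentered, zero_mul]

theorem hasDerivAt_div_sum_of_hasDerivAt_mul {P : ι → ℝ → ℝ} {c : ι → ℝ} {t : ℝ}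
    (hP : ∀ i, HasDerivAt (P i) (c i * P i t) t) (hS : ∑ j, P j t ≠ 0) (i : ι) :
    HasDerivAt (fun s ↦ P i s / ∑ j, P j s)
      ((P i t / ∑ j, P j t) * (c i - ∑ j, (P j t / ∑ k, P k t) * c j)) t := by
  have hsum : HasDerivAt (fun s ↦ ∑ j, P j s) (∑ j, c j * P j t) t :=
    HasDerivAt.fun_sum fun j _ ↦ hP j
  have hmean : ∑ j, (P j t / ∑ k, P k t) * c j = (∑ j, c j * P j t) / ∑ k, P k t := by
    rw [sum_div]; exact sum_congr rfl fun j _ ↦ by ring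
  refine ((hP i).div hsum hS).congr_deriv ?_
  rw [hmean]
  field_simp

end

theorem deriv_mean_fitness_constant_case_general
    (n : ℕ) (P : Fin n → ℝ → ℝ) (c : Fin n → ℝ)
    (hpos : ∀ i t, 0 < P i t)
    (hLV : ∀ i t, HasDerivAt (P i) (c i * P i t) t)
    (p : Fin n → ℝ → ℝ)
    (hp : ∀ i t, p i t = P i t / ∑ j, P j t)
    (fbar : ℝ → ℝ)
    (hfbar : ∀ t, fbar t = ∑ j, p j t * c j) :
    (∀ t, HasDerivAt fbar (∑ j, p j t * (c j - fbar t) ^ 2) t) ∧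
      Monotone fbar := by
  have hderiv (t : ℝ) : HasDerivAt fbar (∑ j, p j t * (c j - fbar t) ^ 2) t := by
    have hreplicator (i : Fin n) : HasDerivAt (p i) (p i t * (c i - fbar t)) t := by
      have hS := (hpos i t).trans_le (single_le_sum (fun j _ ↦ (hpos j t).le) (mem_univ i))
      simp only [funext (hp i), hfbar, hp]
      exact hasDerivAt_div_sum_of_hasDerivAt_mul (hLV · t) hS.ne' i
    have hcentered : ∑ j, p j t * (c j - ∑ k, p k t * c k) = 0 := by
      simpa only [hp] using sum_div_sum_mul_sub_mean_eq_zero (P · t) c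
    have hvariance : ∑ j, p j t * (c j - fbar t) * c j = ∑ j, p j t * (c j - fbar t) ^ 2 := by
      rw [hfbar t]; exact sum_mul_sub_mean_mul_eq_sum_mul_sub_mean_sq _ _ hcentered
    have hmean := HasDerivAt.fun_sum (u := univ) fun j _ ↦ (hreplicator j).mul_const (c j)
    rwa [← funext hfbar, hvariance] at hmean
  have hp_nonneg (j : Fin n) (t : ℝ) : 0 ≤ p j t := by
    rw [hp]; exact div_nonneg (hpos j t).le (sum_nonneg fun k _ ↦ (hpos k t).le)
  refine ⟨hderiv, monotone_of_hasDerivAt_nonneg hderiv fun t ↦ ?_⟩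
  exact sum_nonneg fun j _ ↦ mul_nonneg (hp_nonneg j t) (sq_nonneg _)

/-- **Constant fitness case: mean fitness increases at a rate equal to the
variance in fitness.**  If positive differentiable populations obey
`(P i)' = c i * P i` with constants `c i`, and `p i = P i / ∑ j, P j`,
`f̄ = ∑ j, p j * c j`, then `d f̄/dt = ∑ j, p j * (c j - f̄)^2`; in particular
`f̄` is nondecreasing in time. -/
theorem deriv_mean_fitness_constant_case
    (n : ℕ) (P : Fin n → ℝ → ℝ) (c : Fin n → ℝ)
    (hpos : ∀ i t, 0 < P i t)
    (hPdiff : ∀ i, Differentiable ℝ (P i))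
    (hLV : ∀ i t, HasDerivAt (P i) (c i * P i t) t)
    (p : Fin n → ℝ → ℝ)
    (hp : ∀ i t, p i t = P i t / ∑ j, P j t)
    (fbar : ℝ → ℝ)
    (hfbar : ∀ t, fbar t = ∑ j, p j t * c j) :
    (∀ t, HasDerivAt fbar (∑ j, p j t * (c j - fbar t) ^ 2) t) ∧
      Monotone fbar :=
  deriv_mean_fitness_constant_case_general n P c hpos hLV p hp fbar hfbar
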